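/- On U = ℝ³ with coordinates (x, y, t), set z := x + iy and consider the mixed-degree complex form ρ := z + dz + i dz ∧ dt, where dz = dx + i dy. Then: (i) dρ = (i ∂_t)·ρ, i.e. dρ = i ι_{∂_t} ρ; and (ii) the B₃ spinor pairing satisfies (ρ, ρ̄) = −4 dx ∧ dy ∧ dt at every point; in particular (ρ, ρ̄) is nowhere vanishing (ρ has real index zero), so ρ defines a B₃-generalized complex structure on ℝ³ whose type is 0 where z ≠ 0 and 1 where z = 0. -/
import Mathlib


noncomputable section

/-- A mixed-degree complex differential form on (an open subset of) `ℝⁿ`, described by its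
coefficient functions with respect to the basis `dx_S = dx_{i₁} ∧ … ∧ dx_{i_k}`
(for `S = {i₁ < … < i_k} ⊆ {0,…,n-1}`). -/
abbrev MForm (n : ℕ) := (Fin n → ℝ) → Finset (Fin n) → ℂ

namespace MForm

variable {n : ℕ}

/-- The sign `ε(S,T)` with which `dx_S ∧ dx_T = ε(S,T) dx_{S ∪ T}` for disjoint `S`, `T`. -/
def mergeSign (S T : Finset (Fin n)) : ℂ :=
  (-1 : ℂ) ^ ((S ×ˢ T).filter fun p => p.2 < p.1).card

/-- The wedge product of mixed-degree forms. -/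
def wedge (α β : MForm n) : MForm n := fun x S =>
  ∑ T ∈ S.powerset, mergeSign T (S \ T) * α x T * β x (S \ T)

/-- The parity involution `τρ := ρ₊ − ρ₋`. -/
def tau (ρ : MForm n) : MForm n := fun x S => (-1 : ℂ) ^ S.card * ρ x S

/-- The even part `ρ₊` of a mixed-degree form. -/
def evenPart (ρ : MForm n) : MForm n := fun x S => if Even S.card then ρ x S else 0

/-- The odd part `ρ₋` of a mixed-degree form. -/
def oddPart (ρ : MForm n) : MForm n := fun x S => if Even S.card then 0 else ρ x S

/-- The reversal anti-automorphism, `(α₁∧…∧α_r)⊤ = α_r∧…∧α₁`; on degree `k` it is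
multiplication by `(-1)^(k(k-1)/2)`. -/
def rev (ρ : MForm n) : MForm n := fun x S => (-1 : ℂ) ^ (S.card * (S.card - 1) / 2) * ρ x S

/-- Complex conjugation of a form. -/
def conjF (ρ : MForm n) : MForm n := fun x S => (starRingEnd ℂ) (ρ x S)

/-- The exterior derivative: `(dρ)_S = Σ_{i∈S} (-1)^{#{j∈S : j<i}} ∂_i ρ_{S∖{i}}`, the
coordinate expression of `d`. -/
def extDer (ρ : MForm n) : MForm n := fun x S =>
  ∑ i ∈ S, (-1 : ℂ) ^ (S.filter fun j => j < i).card *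
    fderiv ℝ (fun y => ρ y (S.erase i)) x (Pi.single i 1)

/-- Contraction `ι_X ρ` with a (possibly complex) vector field `X`. -/
def contr (X : (Fin n → ℝ) → Fin n → ℂ) (ρ : MForm n) : MForm n := fun x S =>
  ∑ i ∈ Sᶜ, (-1 : ℂ) ^ (S.filter fun j => j < i).card * X x i * ρ x (insert i S)

/-- The Clifford action of `v = X + f + α` on spinors: `v·ρ := ι_X ρ + f τρ + α ∧ ρ`. -/
def cliffAct (X : (Fin n → ℝ) → Fin n → ℂ) (f : (Fin n → ℝ) → ℂ) (α : MForm n)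
    (ρ : MForm n) : MForm n :=
  fun x S => contr X ρ x S + f x * tau ρ x S + wedge α ρ x S

/-- A form is smooth on `U` when all of its coefficient functions are. -/
def SmoothOn (U : Set (Fin n → ℝ)) (ρ : MForm n) : Prop :=
  ∀ S, ContDiffOn ℝ (⊤ : ℕ∞) (fun x => ρ x S) U

/-- A form is homogeneous of degree `k` when only degree-`k` coefficients are nonzero. -/
def IsHomog (k : ℕ) (ρ : MForm n) : Prop := ∀ x S, S.card ≠ k → ρ x S = 0

/-- A form is real when all of its coefficients are real. -/
def IsReal (ρ : MForm n) : Prop := ∀ x S, (ρ x S).im = 0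

/-- Wedge powers `B^{∧k}`. -/
def wpow (B : MForm n) : ℕ → MForm n
  | 0 => fun _ S => if S = ∅ then 1 else 0
  | k + 1 => wedge B (wpow B k)

/-- `exp(B) = Σ_k B^{∧k}/k!`, a finite sum since `B^{∧k} = 0` for `k > n`. -/
def expW (B : MForm n) : MForm n :=
  ∑ k ∈ Finset.range (n + 1), ((k.factorial : ℂ))⁻¹ • wpow B k

/-- The A-field action `e^A ρ := ρ + A ∧ τρ` of a 1-form `A`. -/
def eA (A ρ : MForm n) : MForm n := ρ + wedge A (tau ρ)

/-- The B-field action `e^B ρ := exp(B) ∧ ρ` of a 2-form `B`. -/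
def eB (B ρ : MForm n) : MForm n := wedge (expW B) ρ

end MForm

open MForm

/-- The constant coordinate 1-forms `dx_i` on `ℝ³`. -/
def dxF (i : Fin 3) : MForm 3 := fun _ S => if S = {i} then 1 else 0

/-- The complex coordinate `z = x + iy` on `ℝ³` (coordinates `(x,y,t)`), as a 0-form. -/
def zF : MForm 3 := fun x S => if S = ∅ then (x 0 : ℂ) + (x 1 : ℂ) * Complex.I else 0

/-- `dz = dx + i dy`. -/
def dzF : MForm 3 := dxF 0 + Complex.I • dxF 1

/-- The B₃ spinor pairing `(ρ,ψ) = [ρ⊤₋ ∧ ψ₊ − ρ⊤₊ ∧ ψ₋]₃` (its coefficient on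
`dx ∧ dy ∧ dt`). -/
def pairB3 (ρ ψ : MForm 3) : (Fin 3 → ℝ) → ℂ := fun x =>
  (wedge (rev (oddPart ρ)) (evenPart ψ) - wedge (rev (evenPart ρ)) (oddPart ψ)) x Finset.univ

lemma sum_fin3 (S : Finset (Fin 3)) (f : Fin 3 → ℂ) :
    ∑ i ∈ S, f i = (if 0 ∈ S then f 0 else 0) + (if 1 ∈ S then f 1 else 0) +
      (if 2 ∈ S then f 2 else 0) := by
  rw [show S = Finset.univ ∩ S from (Finset.univ_inter S).symm, ← Finset.sum_ite_mem,
    Fin.sum_univ_three]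
  simp

lemma sum_pow3 (S : Finset (Fin 3)) (f : Finset (Fin 3) → ℂ) :
    ∑ T ∈ S.powerset, f T =
      (if ∅ ⊆ S then f ∅ else 0) + (if {0} ⊆ S then f {0} else 0) +
      (if {1} ⊆ S then f {1} else 0) + (if {2} ⊆ S then f {2} else 0) +
      (if {0,1} ⊆ S then f {0,1} else 0) + (if {0,2} ⊆ S then f {0,2} else 0) +
      (if {1,2} ⊆ S then f {1,2} else 0) + (if Finset.univ ⊆ S then f Finset.univ else 0) := by
  rw [show S.powerset = Finset.univ.powerset ∩ S.powerset from
    (Finset.inter_eq_right.mpr (by intro T hT; simp)).symm, ← Finset.sum_ite_mem,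
    show (Finset.univ : Finset (Fin 3)).powerset = {∅,{0},{1},{2},{0,1},{0,2},{1,2},Finset.univ} from by decide]
  rw [Finset.sum_insert (by decide), Finset.sum_insert (by decide), Finset.sum_insert (by decide),
    Finset.sum_insert (by decide), Finset.sum_insert (by decide), Finset.sum_insert (by decide),
    Finset.sum_insert (by decide), Finset.sum_singleton]
  simp [Finset.mem_powerset]
  ring

lemma npow_neg_one (n : ℕ) : (-1 : ℂ) ^ n = if Even n then 1 else -1 := by
  split_ifs with h
  · exact h.neg_one_pow
  · exact (Nat.not_even_iff_odd.mp h).neg_one_pow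

def zfun : (Fin 3 → ℝ) → ℂ := fun x => (x 0 : ℂ) + (x 1 : ℂ) * Complex.I

lemma rho_coeff (x : Fin 3 → ℝ) (S : Finset (Fin 3)) :
    (zF + dzF + Complex.I • MForm.wedge dzF (dxF 2)) x S =
      if S = ∅ then zfun x else if S = {0} then 1 else if S = {1} then Complex.I
      else if S = {0,2} then Complex.I else if S = {1,2} then -1 else 0 := by
  fin_cases S <;>
    simp (config := { decide := true }) [Pi.add_apply, Pi.smul_apply, smul_eq_mul, zF, dzF,
      dxF, zfun, MForm.wedge, sum_pow3, MForm.mergeSign, npow_neg_one]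

def pr (i : Fin 3) : (Fin 3 → ℝ) →L[ℝ] ℝ := ContinuousLinearMap.proj i

lemma fderiv_zfun (x : Fin 3 → ℝ) (i : Fin 3) :
    fderiv ℝ zfun x (Pi.single i 1) =
      if i = 0 then 1 else if i = 1 then Complex.I else 0 := by
  have h0 : HasFDerivAt (fun y : Fin 3 → ℝ => ((y 0 : ℝ) : ℂ))
      (Complex.ofRealCLM.comp (pr 0)) x :=
    (Complex.ofRealCLM.comp (pr 0)).hasFDerivAt
  have h1 : HasFDerivAt (fun y : Fin 3 → ℝ => ((y 1 : ℝ) : ℂ))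
      (Complex.ofRealCLM.comp (pr 1)) x :=
    (Complex.ofRealCLM.comp (pr 1)).hasFDerivAt
  have h : HasFDerivAt zfun
      (Complex.ofRealCLM.comp (pr 0) + Complex.I • Complex.ofRealCLM.comp (pr 1)) x :=
    h0.add (h1.mul_const Complex.I)
  rw [h.fderiv]
  fin_cases i <;> simp [pr]

/-- on `ℝ³` with coordinates `(x,y,t)`, the form `ρ = z + dz + i dz ∧ dt`
satisfies `dρ = (i ∂_t)·ρ = i ι_{∂_t} ρ` and `(ρ, ρ̄) = −4 dx∧dy∧dt` everywhere; in
particular `(ρ, ρ̄)` is nowhere vanishing, so `ρ` defines a B₃-generalized complex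
structure, with type change exactly along `z = 0`. -/
theorem typeChange_example_CxR
    (ρ : MForm 3) (hρ : ρ = zF + dzF + Complex.I • wedge dzF (dxF 2))
    (dt : (Fin 3 → ℝ) → Fin 3 → ℂ) (hdt : ∀ x i, dt x i = if i = 2 then 1 else 0) :
    (∀ x S, extDer ρ x S = (Complex.I • contr dt ρ) x S)
    ∧ (∀ x, pairB3 ρ (conjF ρ) x = -4)
    ∧ (∀ x, pairB3 ρ (conjF ρ) x ≠ 0)
    ∧ (∀ x, ρ x ∅ = 0 ↔ (x 0 = 0 ∧ x 1 = 0)) := by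
  subst hρ
  have key : ∀ x, pairB3 (zF + dzF + Complex.I • wedge dzF (dxF 2))
      (conjF (zF + dzF + Complex.I • wedge dzF (dxF 2))) x = -4 := by
    intro x
    simp only [pairB3, Pi.sub_apply, MForm.wedge, sum_pow3]
    simp (config := { decide := true }) [MForm.rev, MForm.evenPart, MForm.oddPart,
      MForm.conjF, MForm.mergeSign, rho_coeff, npow_neg_one, apply_ite (starRingEnd ℂ), map_add, map_mul,
      Complex.conj_ofReal, Complex.conj_I, zfun]
    norm_num
  refine ⟨?_, key, fun x => by rw [key]; norm_num, ?_⟩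
  · intro x S
    simp only [MForm.extDer, MForm.contr, Pi.smul_apply, smul_eq_mul, rho_coeff]
    fin_cases S <;>
      simp (config := { decide := true }) [sum_fin3, npow_neg_one, hdt, fderiv_zfun] 
  · intro x
    rw [rho_coeff]
    simp [zfun, Complex.ext_iff]
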